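/- Let p be a prime, t a positive integer, and x₁, …, x_t pairwise distinct nonzero elements of ZMod p. Fix any u ∈ ZMod p. Let r, a₁, …, a_t be independent uniformly distributed random elements of ZMod p and set f(X) = r + a₁X + ⋯ + a_tX^t. Then the random vector (u − r, f(x₁), …, f(x_t)) is uniformly distributed on (ZMod p)^{t+1}; in particular its distribution does not depend on u. -/
import Mathlib

lemma pmf_map_equiv_self {α : Type*} [Fintype α] [Nonempty α] (e : α ≃ α) :
    (PMF.uniformOfFintype α).map e = PMF.uniformOfFintype α := by
  ext b
  rw [PMF.map_apply]
  rw [tsum_eq_single (e.symm b) (fun a ha => by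
    rw [if_neg]
    intro h
    exact ha (by simp [h]))]
  simp

/-- Step 2 of LoByITFL is perfectly private: for a uniformly random mask `r` and uniformly
random Shamir coefficients `a₁, …, a_t` of `f(X) = r + a₁X + ⋯ + a_tX^t`, the broadcast
`u - r` together with any `t` shares `f(x₁), …, f(x_t)` at pairwise distinct nonzero points is
uniformly distributed on `(ZMod p)^{t+1}`; in particular its distribution does not depend on
the update `u`. -/
theorem masked_update_and_shares_uniform
    (p : ℕ) [Fact p.Prime] (t : ℕ) (ht : 0 < t)
    (x : Fin t → ZMod p) (hx : Function.Injective x) (hx0 : ∀ i, x i ≠ 0)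
    (u : ZMod p) :
    (PMF.uniformOfFintype (ZMod p × (Fin t → ZMod p))).map
        (fun ra => (u - ra.1, fun i => ra.1 + ∑ ℓ : Fin t, ra.2 ℓ * x i ^ ((ℓ : ℕ) + 1)))
      = PMF.uniformOfFintype (ZMod p × (Fin t → ZMod p)) := by
  set M : Matrix (Fin t) (Fin t) (ZMod p) := Matrix.of fun i ℓ => x i ^ ((ℓ : ℕ) + 1) with hM
  have hdet : M.det ≠ 0 := by
    have : M = Matrix.of fun i ℓ => x i * (Matrix.vandermonde x) i ℓ := by
      ext i ℓ
      simp [hM, Matrix.vandermonde, pow_succ, mul_comm]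
    rw [this, Matrix.det_mul_column, Matrix.det_vandermonde]
    apply mul_ne_zero
    · exact Finset.prod_ne_zero_iff.2 fun i _ => hx0 i
    · refine Finset.prod_ne_zero_iff.2 fun i _ => Finset.prod_ne_zero_iff.2 fun j hj => ?_
      exact sub_ne_zero.2 fun h => absurd (hx h) (Fin.ne_of_gt (Finset.mem_Ioi.mp hj))
  have hMunit : IsUnit M := (Matrix.isUnit_iff_isUnit_det M).2 (isUnit_iff_ne_zero.2 hdet)
  have hmv : Function.Injective M.mulVec := Matrix.mulVec_injective_iff_isUnit.2 hMunit
  set f : ZMod p × (Fin t → ZMod p) → ZMod p × (Fin t → ZMod p) :=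
    fun ra => (u - ra.1, fun i => ra.1 + ∑ ℓ : Fin t, ra.2 ℓ * x i ^ ((ℓ : ℕ) + 1)) with hf
  have hinj : Function.Injective f := by
    rintro ⟨r, a⟩ ⟨r', a'⟩ h
    simp only [hf, Prod.mk.injEq] at h
    obtain ⟨h1, h2⟩ := h
    have hr : r = r' := by linear_combination -h1
    subst hr
    refine Prod.ext rfl ?_
    have : M.mulVec a = M.mulVec a' := by
      funext i
      have := congrFun h2 i
      simp only [add_right_inj] at this
      simpa [Matrix.mulVec, dotProduct, hM, mul_comm] using this
    exact hmv this
  have hbij : Function.Bijective f := (Fintype.bijective_iff_injective_and_card f).2 ⟨hinj, rfl⟩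
  have := pmf_map_equiv_self (Equiv.ofBijective f hbij)
  simpa [Equiv.ofBijective] using this
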